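/- Let A be a unital topological algebra and p a continuous seminorm. Suppose there exist a continuous seminorm q and s > 0 such that ∑_{n≥1} s^n ‖π_n‖_{p,q} < ∞, where π_n(x) = x^n. Then for every t ∈ (0, s/e), ∑_{n≥1} t^n ‖μ_n^{sym}‖_{p,q} < ∞, where μ_n^{sym} is the symmetrized n-fold multiplication map. -/

import Mathlib

/-
Sign polarization: for a multilinear map `f`, the coefficient of `f (x ∘ r)` in
`∑ ε, (∏ i, εᵢ) • f (∑ i, εᵢ • xᵢ, …, ∑ i, εᵢ • xᵢ)`, the sum over all signs `ε ∈ {±1}ⁿ`, is the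
sum of a character of `{±1}ⁿ` that is trivial exactly when `r` is a permutation; so the sum is
`2ⁿ ∑ σ, f (x ∘ σ)`. Applied to the product map this writes `n! μₙˢʸᵐ(x)` as an average of
`±(∑ i, εᵢ • xᵢ)ⁿ`, and if `q xᵢ ≤ 1` then `q (∑ i, εᵢ • xᵢ) ≤ n`, whence
`n! ‖μₙˢʸᵐ‖ ≤ nⁿ ‖πₙ‖`. As `nⁿ ≤ eⁿ n!`, for `t e ≤ s` the `n`-th term of the second series is
dominated by the `n`-th term of the first.
-/

open scoped ENNReal

noncomputable def muSym {A : Type*} [Ring A] [Algebra ℂ A] (n : ℕ) (x : Fin n → A) : A :=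
  (Nat.factorial n : ℂ)⁻¹ • ∑ σ : Equiv.Perm (Fin n), (List.ofFn (x ∘ σ)).prod

noncomputable def muSymNorm {A : Type*} [Ring A] [Algebra ℂ A]
    (p q : Seminorm ℂ A) (n : ℕ) : ℝ≥0∞ :=
  ⨆ x : {x : Fin n → A // ∀ i, q (x i) ≤ 1}, ENNReal.ofReal (p (muSym n x.1))

noncomputable def piNorm {A : Type*} [Ring A] [Algebra ℂ A]
    (p q : Seminorm ℂ A) (n : ℕ) : ℝ≥0∞ :=
  ⨆ x : {x : A // q x ≤ 1}, ENNReal.ofReal (p (x.1 ^ n))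

open Finset Function

section Signs

variable {ι : Type*} [Fintype ι]

def signCharacter (r : ι → ι) : (ι → ℤˣ) →* ℤ where
  toFun ε := ((∏ i, ε i) * ∏ j, ε (r j) : ℤˣ)
  map_one' := by simp
  map_mul' ε δ := by
    simp only [Pi.mul_apply, prod_mul_distrib, ← Units.val_mul, mul_mul_mul_comm]

lemma signCharacter_apply (r : ι → ι) (ε : ι → ℤˣ) :
    signCharacter r ε = ((∏ i, ε i) * ∏ j, ε (r j) : ℤˣ) := rfl

lemma signCharacter_eq_one {r : ι → ι} (hr : Surjective r) : signCharacter r = 1 := by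
  refine MonoidHom.ext fun ε => ?_
  have hbij : Bijective r := ⟨Finite.injective_iff_surjective.mpr hr, hr⟩
  rw [signCharacter_apply, hbij.prod_comp ε, Int.units_mul_self, MonoidHom.one_apply,
    Units.val_one]

lemma signCharacter_ne_one {r : ι → ι} (hr : ¬Surjective r) : signCharacter r ≠ 1 := by
  classical
  obtain ⟨i₀, hi₀⟩ := not_forall.mp hr
  intro h
  have := DFunLike.congr_fun h (Pi.mulSingle i₀ (-1))
  have hprod : ∏ j, (Pi.mulSingle i₀ (-1) : ι → ℤˣ) (r j) = 1 :=
    prod_eq_one fun j _ => Pi.mulSingle_eq_of_ne (fun h => hi₀ ⟨j, h⟩) _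
  rw [signCharacter_apply, hprod, prod_pi_mulSingle', MonoidHom.one_apply] at this
  simp at this

variable [DecidableEq ι]

lemma sum_signCharacter (r : ι → ι) [Decidable (Surjective r)] :
    ∑ ε, signCharacter r ε = if Surjective r then 2 ^ Fintype.card ι else 0 := by
  split_ifs with hr
  · simp [signCharacter_eq_one hr]
  · exact sum_hom_units_eq_zero _ (signCharacter_ne_one hr)

lemma sum_ite_surjective_eq_sum_perm {M : Type*} [AddCommMonoid M] (g : (ι → ι) → M)
    [DecidablePred (Surjective : (ι → ι) → Prop)] :
    ∑ r, (if Surjective r then g r else 0) = ∑ σ : Equiv.Perm ι, g σ := by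
  rw [← sum_filter]
  symm
  refine sum_bij (fun σ _ => ⇑σ) (fun σ _ => by simpa using σ.surjective)
    (fun σ _ τ _ h => Equiv.ext (congrFun h)) (fun r hr => ?_) (fun _ _ => rfl)
  have hr : Surjective r := (mem_filter.mp hr).2
  exact ⟨Equiv.ofBijective r ⟨Finite.injective_iff_surjective.mpr hr, hr⟩, mem_univ _, rfl⟩

theorem MultilinearMap.sign_polarization {M N : Type*} [AddCommGroup M] [AddCommGroup N]
    (f : MultilinearMap ℤ (fun _ : ι => M) N) (x : ι → M) :
    ∑ ε : ι → ℤˣ, (∏ i, (ε i : ℤ)) • f (fun _ => ∑ i, (ε i : ℤ) • x i)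
      = (2 ^ Fintype.card ι : ℤ) • ∑ σ : Equiv.Perm ι, f (x ∘ σ) := by
  classical
  have expand (ε : ι → ℤˣ) : f (fun _ => ∑ i, (ε i : ℤ) • x i)
      = ∑ r : ι → ι, (∏ j, (ε (r j) : ℤ)) • f (x ∘ r) := by
    rw [f.map_sum]
    simp_rw [f.map_smul_univ]
    rfl
  calc ∑ ε : ι → ℤˣ, (∏ i, (ε i : ℤ)) • f (fun _ => ∑ i, (ε i : ℤ) • x i)
      = ∑ r : ι → ι, (∑ ε, signCharacter r ε) • f (x ∘ r) := by
        simp_rw [expand, smul_sum, smul_smul, sum_smul]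
        rw [sum_comm]
        simp [signCharacter]
    _ = ∑ r : ι → ι, if Surjective r then (2 ^ Fintype.card ι : ℤ) • f (x ∘ r) else 0 := by
        simp_rw [sum_signCharacter]
        refine sum_congr rfl fun r _ => ?_
        split_ifs <;> simp
    _ = (2 ^ Fintype.card ι : ℤ) • ∑ σ : Equiv.Perm ι, f (x ∘ σ) := by
        rw [sum_ite_surjective_eq_sum_perm, smul_sum]

end Signs

lemma map_units_int_smul {E F : Type*} [AddCommGroup E] [FunLike F E ℝ]
    [AddGroupSeminormClass F E ℝ] (p : F) (u : ℤˣ) (x : E) : p ((u : ℤ) • x) = p x := by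
  rcases Int.units_eq_one_or u with rfl | rfl <;> simp

lemma map_sum_le_sum {E F ι : Type*} [AddCommGroup E] [FunLike F E ℝ]
    [AddGroupSeminormClass F E ℝ] (p : F) (s : Finset ι) (f : ι → E) :
    p (∑ i ∈ s, f i) ≤ ∑ i ∈ s, p (f i) :=
  le_sum_of_subadditive p (map_zero p).le (map_add_le_add p) s f

lemma pow_le_exp_one_pow_mul_factorial (n : ℕ) : (n : ℝ) ^ n ≤ Real.exp 1 ^ n * n.factorial := by
  have h := Real.pow_div_factorial_le_exp (n : ℝ) (Nat.cast_nonneg n) n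
  rwa [div_le_iff₀ (by positivity), ← Real.exp_one_pow] at h

section Estimates

variable {A : Type*} [Ring A] [Algebra ℂ A]

lemma factorial_mul_two_pow_smul_muSym (n : ℕ) (x : Fin n → A) :
    ((n.factorial * 2 ^ n : ℕ) : ℂ) • muSym n x
      = ∑ ε : Fin n → ℤˣ, (∏ i, (ε i : ℤ)) • (∑ i, (ε i : ℤ) • x i) ^ n := by
  have h := (MultilinearMap.mkPiAlgebraFin ℤ n A).sign_polarization x
  simp only [MultilinearMap.mkPiAlgebraFin_apply, List.ofFn_const, List.prod_replicate,
    Fintype.card_fin] at h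
  rw [h, muSym, smul_smul, Nat.cast_mul, mul_right_comm,
    mul_inv_cancel₀ (by exact_mod_cast n.factorial_ne_zero), one_mul, ← Int.cast_smul_eq_zsmul ℂ]
  norm_num

lemma ofReal_apply_pow_le_piNorm (p q : Seminorm ℂ A) (n : ℕ) {y : A} {r : ℝ} (hr : 0 < r)
    (hy : q y ≤ r) : ENNReal.ofReal (p (y ^ n)) ≤ ENNReal.ofReal r ^ n * piNorm p q n := by
  set w := ((r : ℂ)⁻¹) • y
  have hw : q w ≤ 1 := by
    rw [map_smul_eq_mul, norm_inv, Complex.norm_real, Real.norm_of_nonneg hr.le]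
    exact inv_mul_le_one_of_le₀ hy hr.le
  have hyw : y ^ n = ((r : ℂ) ^ n) • w ^ n := by
    rw [← smul_pow, smul_inv_smul₀ (by exact_mod_cast hr.ne')]
  rw [hyw, map_smul_eq_mul, norm_pow, Complex.norm_real, Real.norm_of_nonneg hr.le,
    ENNReal.ofReal_mul (by positivity), ENNReal.ofReal_pow hr.le]
  gcongr
  exact le_iSup (fun z : {z : A // q z ≤ 1} => ENNReal.ofReal (p (z.1 ^ n))) ⟨w, hw⟩

lemma factorial_mul_muSymNorm_le (p q : Seminorm ℂ A) {n : ℕ} (hn : 0 < n) :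
    (n.factorial : ℝ≥0∞) * muSymNorm p q n ≤ (n : ℝ≥0∞) ^ n * piNorm p q n := by
  rw [muSymNorm, ENNReal.mul_iSup]
  refine iSup_le fun ⟨x, hx⟩ => ?_
  set y : (Fin n → ℤˣ) → A := fun ε => ∑ i, (ε i : ℤ) • x i
  have hy (ε : Fin n → ℤˣ) : ENNReal.ofReal (p (y ε ^ n)) ≤ (n : ℝ≥0∞) ^ n * piNorm p q n := by
    have hq : q (y ε) ≤ n :=
      calc q (y ε) ≤ ∑ i, q ((ε i : ℤ) • x i) := map_sum_le_sum q _ _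
        _ = ∑ i, q (x i) := by simp_rw [map_units_int_smul]
        _ ≤ ∑ _i : Fin n, 1 := sum_le_sum fun i _ => hx i
        _ = n := by simp
    simpa using ofReal_apply_pow_le_piNorm p q n (by positivity : (0 : ℝ) < n) hq
  have hp : (n.factorial * 2 ^ n : ℝ) * p (muSym n x) ≤ ∑ ε, p (y ε ^ n) :=
    calc (n.factorial * 2 ^ n : ℝ) * p (muSym n x)
        = p (((n.factorial * 2 ^ n : ℕ) : ℂ) • muSym n x) := by
          rw [map_smul_eq_mul, Complex.norm_natCast]; norm_num
      _ ≤ ∑ ε, p ((∏ i, (ε i : ℤ)) • y ε ^ n) := by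
          rw [factorial_mul_two_pow_smul_muSym]; exact map_sum_le_sum p _ _
      _ = ∑ ε, p (y ε ^ n) := by simp_rw [← Units.coe_prod, map_units_int_smul]
  rw [← ENNReal.mul_le_mul_iff_right (pow_ne_zero n two_ne_zero) (by simp : (2 : ℝ≥0∞) ^ n ≠ ⊤)]
  calc 2 ^ n * ((n.factorial : ℝ≥0∞) * ENNReal.ofReal (p (muSym n x)))
      = ENNReal.ofReal ((n.factorial * 2 ^ n : ℝ) * p (muSym n x)) := by
        rw [ENNReal.ofReal_mul (by positivity), ENNReal.ofReal_mul (by positivity),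
          ENNReal.ofReal_natCast, ENNReal.ofReal_pow zero_le_two, ENNReal.ofReal_ofNat]
        ring
    _ ≤ ∑ ε, ENNReal.ofReal (p (y ε ^ n)) := by
        rw [← ENNReal.ofReal_sum_of_nonneg fun ε _ => apply_nonneg p _]
        exact ENNReal.ofReal_le_ofReal hp
    _ ≤ ∑ _ε : Fin n → ℤˣ, (n : ℝ≥0∞) ^ n * piNorm p q n := sum_le_sum fun ε _ => hy ε
    _ = 2 ^ n * ((n : ℝ≥0∞) ^ n * piNorm p q n) := by simp

lemma pow_mul_muSymNorm_le (p q : Seminorm ℂ A) {n : ℕ} (hn : 0 < n) {s t : ℝ} (ht : 0 ≤ t)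
    (hts : t * Real.exp 1 ≤ s) :
    ENNReal.ofReal t ^ n * muSymNorm p q n ≤ ENNReal.ofReal s ^ n * piNorm p q n := by
  have hs : 0 ≤ s := le_trans (by positivity) hts
  have hreal : (t * n) ^ n ≤ n.factorial * s ^ n :=
    calc (t * n) ^ n = t ^ n * n ^ n := mul_pow _ _ _
      _ ≤ t ^ n * (Real.exp 1 ^ n * n.factorial) := by
          gcongr; exact pow_le_exp_one_pow_mul_factorial n
      _ = n.factorial * (t * Real.exp 1) ^ n := by ring
      _ ≤ n.factorial * s ^ n := by gcongr
  rw [← ENNReal.mul_le_mul_iff_right (by exact_mod_cast n.factorial_ne_zero)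
    (ENNReal.natCast_ne_top _)]
  calc (n.factorial : ℝ≥0∞) * (ENNReal.ofReal t ^ n * muSymNorm p q n)
      = ENNReal.ofReal t ^ n * (n.factorial * muSymNorm p q n) := by ring
    _ ≤ ENNReal.ofReal t ^ n * (n ^ n * piNorm p q n) :=
        mul_le_mul_right (factorial_mul_muSymNorm_le p q hn) _
    _ = ENNReal.ofReal ((t * n) ^ n) * piNorm p q n := by
        rw [ENNReal.ofReal_pow (by positivity), ENNReal.ofReal_mul ht, ENNReal.ofReal_natCast]
        ring
    _ ≤ ENNReal.ofReal (n.factorial * s ^ n) * piNorm p q n := by gcongr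
    _ = n.factorial * (ENNReal.ofReal s ^ n * piNorm p q n) := by
        rw [ENNReal.ofReal_mul (by positivity), ENNReal.ofReal_natCast, ENNReal.ofReal_pow hs]
        ring

end Estimates

theorem stmt3_general {A : Type*} [Ring A] [Algebra ℂ A]
    (p q : Seminorm ℂ A)
    (s : ℝ)
    (hsum : (∑' n : ℕ, ENNReal.ofReal s ^ (n + 1) * piNorm p q (n + 1)) ≠ ⊤) :
    ∀ t : ℝ, 0 < t → t < s / Real.exp 1 →
      (∑' n : ℕ, ENNReal.ofReal t ^ (n + 1) * muSymNorm p q (n + 1)) ≠ ⊤ := by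
  intro t ht hts
  have hte : t * Real.exp 1 ≤ s := ((lt_div_iff₀ (Real.exp_pos 1)).mp hts).le
  exact ne_top_of_le_ne_top hsum
    (ENNReal.tsum_le_tsum fun n => pow_mul_muSymNorm_le p q n.succ_pos ht.le hte)

theorem stmt3 {A : Type*} [Ring A] [Algebra ℂ A]
    [TopologicalSpace A] [IsTopologicalRing A] [ContinuousSMul ℂ A]
    (p q : Seminorm ℂ A) (hp : Continuous p) (hq : Continuous q)
    (s : ℝ) (hs : 0 < s)
    (hsum : (∑' n : ℕ, ENNReal.ofReal s ^ (n + 1) * piNorm p q (n + 1)) ≠ ⊤) :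
    ∀ t : ℝ, 0 < t → t < s / Real.exp 1 →
      (∑' n : ℕ, ENNReal.ofReal t ^ (n + 1) * muSymNorm p q (n + 1)) ≠ ⊤ :=
  stmt3_general p q s hsum
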